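/- arXiv:1003.3591 — 6 statements merged into one kernel-verified Lean document; each statement's English description precedes it below -/
import Mathlib

section
/- For every d ≥ 2 and every SIC POVM ψ_1, …, ψ_{d²} in ℂ^d, the group of all determinant-1 unitary operators on ℂ^d that leave the SIC POVM invariant is finite. -/
/-!
The vectors of a SIC POVM are pairwise non-orthogonal, and they span `ℂ^d`: the Gram matrix
`|⟨ψ_j, ψ_k⟩|² = (1 - r) δ_jk + r` (with `r = 1/(d+1)`) of their rank-one projectors is invertible,
so these `d²` projectors form a basis of the matrices and in particular span the identity.
Consequently an invariant unitary is determined, up to a phase, by the map `σ` it induces on the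
indices: if `U ψ_j` and `U' ψ_j` are proportional for every `j`, comparing inner products of the
images forces one common phase `e`, so `U' = e U`, and `det U = det U' = 1` makes `e` a `d`-th root
of unity. Each of the finitely many maps `σ` therefore accounts for at most `d` operators.
-/

noncomputable section

open Complex Matrix

/-- The standard Hermitian inner product on `ℂ^d`, conjugate-linear in the first argument. -/
def inn {d : ℕ} (x y : Fin d → ℂ) : ℂ := ∑ i, (starRingEnd ℂ) (x i) * y i

/-- A SIC POVM in dimension `d`: `d²` unit vectors with pairwise squared overlap `1/(d+1)`. -/
def IsSIC {d : ℕ} (ψ : Fin (d ^ 2) → (Fin d → ℂ)) : Prop :=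
  (∀ j, inn (ψ j) (ψ j) = 1) ∧
    ∀ j k, j ≠ k → ‖inn (ψ j) (ψ k)‖ ^ 2 = 1 / (d + 1)

/-- A single operator `U` leaves the SIC POVM `ψ` invariant: it permutes the vectors up to
modulus-one phase factors. -/
def LeavesInvariant {d : ℕ} (U : Matrix (Fin d) (Fin d) ℂ)
    (ψ : Fin (d ^ 2) → (Fin d → ℂ)) : Prop :=
  ∀ j, ∃ k, ∃ c : ℂ, ‖c‖ = 1 ∧ U.mulVec (ψ j) = c • ψ k

/-- The SIC POVM `ψ` is covariant with respect to the set of operators `G`: every element of `G`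
leaves it invariant, and `G` acts transitively on the vectors (up to phases). -/
def CovariantWith {d : ℕ} (G : Set (Matrix (Fin d) (Fin d) ℂ))
    (ψ : Fin (d ^ 2) → (Fin d → ℂ)) : Prop :=
  (∀ U ∈ G, LeavesInvariant U ψ) ∧
    ∀ j k, ∃ U ∈ G, ∃ c : ℂ, ‖c‖ = 1 ∧ U.mulVec (ψ j) = c • ψ k

/-- The set of matrices underlying a subgroup of the unitary group. -/
def matSet {d : ℕ} (G : Subgroup (Matrix.unitaryGroup (Fin d) ℂ)) :
    Set (Matrix (Fin d) (Fin d) ℂ) :=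
  (fun U : Matrix.unitaryGroup (Fin d) ℂ => (U : Matrix (Fin d) (Fin d) ℂ)) '' G

section

variable {ι n : Type*} [Fintype n]

theorem eq_zero_of_forall_mul_add_mul_sum_eq_zero {K : Type*} [Field K] [Fintype ι] {a b : K}
    (ha : a ≠ 0) (hab : a + Fintype.card ι * b ≠ 0) {g : ι → K}
    (h : ∀ k, a * g k + b * ∑ j, g j = 0) (k : ι) : g k = 0 := by
  have hsum : (a + Fintype.card ι * b) * ∑ j, g j = 0 := by
    have := Finset.sum_eq_zero (s := Finset.univ) fun k _ => h k
    rw [Finset.sum_add_distrib, ← Finset.mul_sum, Finset.sum_const, Finset.card_univ,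
      nsmul_eq_mul] at this
    linear_combination this
  have h0 : ∑ j, g j = 0 := (mul_eq_zero.mp hsum).resolve_left hab
  simpa [h0, ha] using h k

theorem linearIndependent_vecMulVec_of_dotProduct_mul_dotProduct [Fintype ι] [DecidableEq ι]
    {v : ι → n → ℂ} {a b : ℂ} (ha : a ≠ 0) (hab : a + Fintype.card ι * b ≠ 0)
    (hv : ∀ i j, (star (v i) ⬝ᵥ v j) * (star (v j) ⬝ᵥ v i) = (if i = j then a else 0) + b) :
    LinearIndependent ℂ fun i => vecMulVec (v i) (star (v i)) := by
  refine Fintype.linearIndependent_iff.mpr fun g hg => ?_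
  refine eq_zero_of_forall_mul_add_mul_sum_eq_zero ha hab fun k => ?_
  have h := congrArg (fun M => star (v k) ⬝ᵥ M *ᵥ v k) hg
  simp only [sum_mulVec, dotProduct_sum, smul_mulVec, vecMulVec_mulVec, op_smul_eq_smul,
    dotProduct_smul, smul_eq_mul, zero_mulVec, dotProduct_zero] at h
  simp_rw [hv, mul_add, mul_ite, mul_zero, Finset.sum_add_distrib,
    Finset.sum_ite_eq', Finset.mem_univ, if_true, ← Finset.sum_mul] at h
  linear_combination h

theorem span_range_eq_top_of_linearIndependent_vecMulVec [Fintype ι] [DecidableEq n]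
    {v : ι → n → ℂ} (hli : LinearIndependent ℂ fun i => vecMulVec (v i) (star (v i)))
    (hcard : Fintype.card ι = Fintype.card n ^ 2) : Submodule.span ℂ (Set.range v) = ⊤ := by
  have hone : (1 : Matrix n n ℂ) ∈
      Submodule.span ℂ (Set.range fun i => vecMulVec (v i) (star (v i))) := by
    rw [hli.span_eq_top_of_card_eq_finrank' (by simp [Module.finrank_matrix, hcard, sq])]
    trivial
  refine Submodule.eq_top_iff'.mpr fun x => ?_
  simpa using Submodule.span_induction
    (p := fun M _ => M *ᵥ x ∈ Submodule.span ℂ (Set.range v))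
    (by
      rintro _ ⟨i, rfl⟩
      rw [vecMulVec_mulVec, op_smul_eq_smul]
      exact Submodule.smul_mem _ _ (Submodule.subset_span ⟨i, rfl⟩))
    (by simp)
    (fun _ _ _ _ hx hy => by rw [add_mulVec]; exact Submodule.add_mem _ hx hy)
    (fun c _ _ hx => by rw [smul_mulVec]; exact Submodule.smul_mem _ c hx) hone

variable [DecidableEq n]

theorem star_mulVec_dotProduct_mulVec {U : Matrix n n ℂ} (hU : U ∈ unitaryGroup n ℂ)
    (x y : n → ℂ) : star (U *ᵥ x) ⬝ᵥ U *ᵥ y = star x ⬝ᵥ y := by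
  rw [star_mulVec, ← dotProduct_mulVec, mulVec_mulVec, ← star_eq_conjTranspose,
    mem_unitaryGroup_iff'.mp hU, one_mulVec]

theorem eq_of_mulVec_eq_smul_mulVec {U U' : Matrix n n ℂ} (hU : U ∈ unitaryGroup n ℂ)
    (hU' : U' ∈ unitaryGroup n ℂ) {v : ι → n → ℂ} (hv : ∀ i j, star (v i) ⬝ᵥ v j ≠ 0)
    {e : ι → ℂ} (he : ∀ i, U' *ᵥ v i = e i • U *ᵥ v i) (i j : ι) : e i = e j := by
  have hphase : ∀ i j, star (e i) * e j = 1 := fun i j => by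
    have h := star_mulVec_dotProduct_mulVec hU' (v i) (v j)
    rw [he, he, star_smul, smul_dotProduct, dotProduct_smul,
      star_mulVec_dotProduct_mulVec hU, smul_smul, smul_eq_mul] at h
    exact mul_right_cancel₀ (hv i j) (by rw [one_mul, h])
  exact mul_left_cancel₀ (left_ne_zero_of_mul_eq_one (hphase j i))
    ((hphase j i).trans (hphase j j).symm)

theorem eq_smul_of_mulVec_eq_smul_mulVec {U U' : Matrix n n ℂ} (hU : U ∈ unitaryGroup n ℂ)
    (hU' : U' ∈ unitaryGroup n ℂ) {v : ι → n → ℂ}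
    (hspan : Submodule.span ℂ (Set.range v) = ⊤) (hv : ∀ i j, star (v i) ⬝ᵥ v j ≠ 0)
    {e : ι → ℂ} (he : ∀ i, U' *ᵥ v i = e i • U *ᵥ v i) (i : ι) : U' = e i • U := by
  refine toLin'.injective (LinearMap.ext_on_range hspan fun j => ?_)
  rw [toLin'_apply, toLin'_apply, smul_mulVec, he, eq_of_mulVec_eq_smul_mulVec hU hU' hv he]

theorem finite_setOf_unitary_det_eq_one_mulVec_eq_smul_comp [Nonempty ι]
    (hn : 0 < Fintype.card n) {v : ι → n → ℂ} (hspan : Submodule.span ℂ (Set.range v) = ⊤)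
    (hv : ∀ i j, star (v i) ⬝ᵥ v j ≠ 0) (σ : ι → ι) :
    {U : Matrix n n ℂ | U ∈ unitaryGroup n ℂ ∧ U.det = 1 ∧
      ∀ i, ∃ c : ℂ, ‖c‖ = 1 ∧ U *ᵥ v i = c • v (σ i)}.Finite := by
  obtain ⟨i⟩ := ‹Nonempty ι›
  by_contra hinf
  obtain ⟨U₀, hU₀, hdet₀, hσ₀⟩ := Set.Infinite.nonempty hinf
  refine hinf (((Polynomial.nthRootsFinset (Fintype.card n) (1 : ℂ)).finite_toSet.image
    (· • U₀)).subset ?_)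
  rintro U ⟨hU, hdet, hσ⟩
  choose c₀ hc₀ hU₀c using hσ₀
  choose c _ hUc using hσ
  have hU_eq : U = (c i / c₀ i) • U₀ := by
    refine eq_smul_of_mulVec_eq_smul_mulVec (e := fun j => c j / c₀ j) hU₀ hU hspan hv
      (fun j => ?_) i
    have hc₀j : c₀ j ≠ 0 := norm_ne_zero_iff.mp (by rw [hc₀ j]; exact one_ne_zero)
    rw [hUc, hU₀c, smul_smul, div_mul_cancel₀ _ hc₀j]
  refine ⟨c i / c₀ i, (Polynomial.mem_nthRootsFinset hn 1).mpr ?_, hU_eq.symm⟩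
  simpa [hU_eq, det_smul, hdet₀] using hdet

end

theorem inn_eq_star_dotProduct {d : ℕ} (x y : Fin d → ℂ) : inn x y = star x ⬝ᵥ y := rfl

namespace IsSIC

variable {d : ℕ} {ψ : Fin (d ^ 2) → Fin d → ℂ}

theorem star_dotProduct_mul_star_dotProduct (hψ : IsSIC ψ) (j k : Fin (d ^ 2)) :
    (star (ψ j) ⬝ᵥ ψ k) * (star (ψ k) ⬝ᵥ ψ j) =
      (if j = k then 1 - ((d : ℂ) + 1)⁻¹ else 0) + ((d : ℂ) + 1)⁻¹ := by
  by_cases hjk : j = k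
  · subst hjk
    simp [← inn_eq_star_dotProduct, hψ.1 j]
  · rw [if_neg hjk, zero_add, star_dotProduct (ψ k), ← inn_eq_star_dotProduct,
      ← starRingEnd_apply, Complex.mul_conj', ← Complex.ofReal_pow, hψ.2 j k hjk]
    push_cast
    rw [one_div]

theorem star_dotProduct_ne_zero (hψ : IsSIC ψ) (j k : Fin (d ^ 2)) :
    star (ψ j) ⬝ᵥ ψ k ≠ 0 := by
  refine left_ne_zero_of_mul (a := _) (b := star (ψ k) ⬝ᵥ ψ j) ?_
  rw [hψ.star_dotProduct_mul_star_dotProduct]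
  split_ifs
  · simp
  · rw [zero_add]
    exact inv_ne_zero (by exact_mod_cast d.succ_ne_zero)

theorem span_range_eq_top (hψ : IsSIC ψ) (hd : d ≠ 0) :
    Submodule.span ℂ (Set.range ψ) = ⊤ := by
  have hd1 : (d : ℂ) + 1 ≠ 0 := by exact_mod_cast d.succ_ne_zero
  have hd' : (d : ℂ) ≠ 0 := by exact_mod_cast hd
  refine span_range_eq_top_of_linearIndependent_vecMulVec
    (linearIndependent_vecMulVec_of_dotProduct_mul_dotProduct ?_ ?_
      hψ.star_dotProduct_mul_star_dotProduct) (by simp)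
  · rw [show 1 - ((d : ℂ) + 1)⁻¹ = d / (d + 1) by field_simp; ring]
    exact div_ne_zero hd' hd1
  · rw [Fintype.card_fin, show 1 - ((d : ℂ) + 1)⁻¹ + ((d ^ 2 : ℕ) : ℂ) * ((d : ℂ) + 1)⁻¹ = d by
      field_simp; push_cast; ring]
    exact hd'

end IsSIC

/-- For every `d ≥ 2` and every SIC POVM in `ℂ^d`, the group of
determinant-one unitary operators leaving the SIC POVM invariant is finite. -/
theorem sic_symmetry_group_finite (d : ℕ) (hd : 2 ≤ d)
    (ψ : Fin (d ^ 2) → (Fin d → ℂ)) (hSIC : IsSIC ψ) :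
    {U : Matrix (Fin d) (Fin d) ℂ |
      U ∈ Matrix.unitaryGroup (Fin d) ℂ ∧ U.det = 1 ∧ LeavesInvariant U ψ}.Finite := by
  have : Nonempty (Fin (d ^ 2)) := ⟨⟨0, by positivity⟩⟩
  have hfiber := finite_setOf_unitary_det_eq_one_mulVec_eq_smul_comp (by simp; omega)
    (hSIC.span_range_eq_top (by omega)) hSIC.star_dotProduct_ne_zero
  refine (Set.finite_iUnion hfiber).subset ?_
  rintro U ⟨hU, hdet, hinv⟩
  choose σ c hc hUc using hinv
  exact Set.mem_iUnion.mpr ⟨σ, hU, hdet, fun j => ⟨c j, hc j, hUc j⟩⟩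
end
end

section
/- Let d ≥ 2 and let u_1, …, u_d be complex roots of unity. Then |u_1 + u_2 + ⋯ + u_d|² ≠ d²/(d+1). -/
/-!
A sum of roots of unity `S` is an algebraic integer, hence so is `‖S‖² = S * conj S`. A rational
algebraic integer is an integer, but `d² / (d + 1)` is not one for `d ≥ 1`, since
`d² = (d + 1)(d - 1) + 1`.
-/

open Complex

theorem isIntegral_of_pow_eq_one {R A : Type*} [CommRing R] [Ring A] [Algebra R A] {x : A}
    {n : ℕ} (hn : 0 < n) (hx : x ^ n = 1) : IsIntegral R x :=
  .of_pow hn (hx ▸ isIntegral_one)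

theorem RCLike.isIntegral_norm_sq {K : Type*} [RCLike K] {z : K} (hz : IsIntegral ℤ z) :
    IsIntegral ℤ ((‖z‖ : K) ^ 2) :=
  RCLike.mul_conj z ▸ hz.mul (hz.map (starRingEnd K).toIntAlgHom)

theorem Int.not_add_one_dvd_sq {d : ℤ} (hd : 0 < d) : ¬d + 1 ∣ d ^ 2 := by
  intro h
  have h_one : d + 1 ∣ 1 := by
    simpa [show d ^ 2 - (d + 1) * (d - 1) = 1 by ring] using dvd_sub h (dvd_mul_right _ (d - 1))
  have := Int.le_of_dvd one_pos h_one
  omega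

theorem Nat.cast_sq_div_add_one_ne_intCast {d : ℕ} (hd : 0 < d) (k : ℤ) :
    (d : ℚ) ^ 2 / (d + 1) ≠ k := by
  intro h
  rw [div_eq_iff (by positivity)] at h
  exact Int.not_add_one_dvd_sq (d := d) (by omega) ⟨k, by rw [mul_comm]; exact_mod_cast h⟩

/-- For `d ≥ 2`, a sum of `d` complex roots of unity never has squared
modulus `d²/(d+1)` (a sum of roots of unity is an algebraic integer, whereas `d²/(d+1)` is a
non-integral rational). -/
theorem sum_roots_of_unity_sq_ne (d : ℕ) (hd : 2 ≤ d) (u : Fin d → ℂ)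
    (hu : ∀ i, ∃ n : ℕ, 0 < n ∧ u i ^ n = 1) :
    ‖∑ i, u i‖ ^ 2 ≠ (d : ℝ) ^ 2 / ((d : ℝ) + 1) := by
  intro h
  have h_sum : IsIntegral ℤ (∑ i, u i) :=
    IsIntegral.sum _ fun i _ ↦
      let ⟨_, hn, hun⟩ := hu i
      isIntegral_of_pow_eq_one hn hun
  have h_rat : (‖∑ i, u i‖ : ℂ) ^ 2 = (((d : ℚ) ^ 2 / (d + 1) : ℚ) : ℂ) := by
    rw [← ofReal_pow, h]
    push_cast
    rfl
  obtain ⟨k, hk⟩ := (RCLike.isIntegral_norm_sq h_sum).exists_int_iff_exists_rat.mp ⟨_, h_rat⟩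
  exact Nat.cast_sq_div_add_one_ne_intCast (d := d) (by omega) k
    (by exact_mod_cast h_rat.symm.trans hk)
end

section
/- Let ω = e^{2πi/3}, let Z be the diagonal 3×3 unitary with Z e_r = ω^r e_r and X the cyclic shift with X e_r = e_{r+1 (mod 3)}, for t ∈ ℝ let ψ_f(t) = (0, 1, −e^{it})/√2 ∈ ℂ³, and let W = diag(1, e^{2πi/9}, e^{4πi/9}). Then for every t ∈ ℝ and all a, b ∈ {0,1,2} there exist a', b' ∈ {0,1,2} and a complex number c of modulus 1 with W Z^b X^a ψ_f(t) = c Z^{b'} X^{a'} ψ_f(t + 2π/9). Consequently, W maps the set of nine lines {ℂ Z^b X^a ψ_f(t)} bijectively onto {ℂ Z^b X^a ψ_f(t + 2π/9)}, so the SIC POVMs generated from ψ_f(t) and from ψ_f(t + 2π/9) are unitarily equivalent. -/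
noncomputable section

open Complex Matrix

/-- The cyclic-shift unitary `X`, `X e_r = e_{r+1 (mod p)}`. -/
def Xmat (p : ℕ) [NeZero p] : Matrix (Fin p) (Fin p) ℂ :=
  Matrix.of fun r s => if r = s + 1 then 1 else 0

/-- The diagonal unitary `Z`, `Z e_r = ω^r e_r` with `ω = exp(2πi/p)`. -/
def Zmat (p : ℕ) : Matrix (Fin p) (Fin p) ℂ :=
  Matrix.diagonal fun r => Complex.exp (2 * (Real.pi : ℂ) * Complex.I * ((r : ℕ) : ℂ) / (p : ℂ))

/-- The standard Heisenberg–Weyl group: the (sub)group of `U(p)` generated by `X` and `Z`,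
regarded as a set of matrices.  (Since `X` and `Z` have finite order, the multiplicative
closure coincides with the generated group.) -/
def HW (p : ℕ) [NeZero p] : Set (Matrix (Fin p) (Fin p) ℂ) :=
  (Submonoid.closure {Xmat p, Zmat p} : Submonoid (Matrix (Fin p) (Fin p) ℂ))

/-- Conjugation `W G W⁻¹` of a set of matrices by a unitary `W` (so `W⁻¹ = star W`). -/
def conjSet {d : ℕ} (W : Matrix (Fin d) (Fin d) ℂ)
    (G : Set (Matrix (Fin d) (Fin d) ℂ)) : Set (Matrix (Fin d) (Fin d) ℂ) :=
  (fun A => W * A * star W) '' G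

/-- The one-parameter family of fiducial vectors `ψ_f(t) = (0, 1, −e^{it})/√2` in `ℂ³`. -/
def ψf (t : ℝ) : Fin 3 → ℂ :=
  ![0, 1 / (Real.sqrt 2 : ℂ), -Complex.exp (Complex.I * (t : ℂ)) / (Real.sqrt 2 : ℂ)]

/-- The vector `Z^b X^a ψ_f(t)` of the Heisenberg–Weyl orbit of `ψ_f(t)`. -/
def sicVec (t : ℝ) (a b : Fin 3) : Fin 3 → ℂ :=
  ((Zmat 3) ^ (b : ℕ) * (Xmat 3) ^ (a : ℕ)).mulVec (ψf t)

/-- The complex line spanned by a vector. -/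
def lineOf (v : Fin 3 → ℂ) : Set (Fin 3 → ℂ) := {w | ∃ c : ℂ, w = c • v}

/-- The nine lines of the SIC POVM generated from `ψ_f(t)`. -/
def sicLines (t : ℝ) : Set (Set (Fin 3 → ℂ)) :=
  {l | ∃ a b : Fin 3, l = lineOf (sicVec t a b)}

/-- The unitary `W = diag(1, e^{2πi/9}, e^{4πi/9})`. -/
def Wmat : Matrix (Fin 3) (Fin 3) ℂ :=
  Matrix.diagonal fun r =>
    Complex.exp (2 * (Real.pi : ℂ) * Complex.I * ((r : ℕ) : ℂ) / 9)

/-! `W` is diagonal, so it commutes with `Z`, and it suffices to follow the three vectors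
`X^a ψ_f(t)`. Each has one zero coordinate, and `W` multiplies the other two by ninth roots of
unity whose ratio is `e^{2πi/9}` times a cube root of unity: the factor `e^{2πi/9}` is absorbed by
the shift `t ↦ t + 2π/9` and the cube root of unity by a power of `Z`. So `W` maps the line of
`Z^b X^a ψ_f(t)` to that of `Z^(b + zShift a) X^a ψ_f(t + 2π/9)`, and
`(a, b) ↦ (a, b + zShift a)` is a bijection. -/

def ζ₉ : ℂ := exp (2 * Real.pi * I / 9)

lemma ζ₉_pow_nine : ζ₉ ^ 9 = 1 := by
  rw [ζ₉, ← exp_nat_mul, ← exp_two_pi_mul_I]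
  congr 1
  push_cast
  ring

lemma norm_ζ₉_pow (n : ℕ) : ‖ζ₉ ^ n‖ = 1 := by
  rw [norm_pow, ζ₉, norm_exp]
  simp

lemma exp_I_mul_add_two_pi_div_nine (t : ℝ) :
    exp (I * ↑(t + 2 * Real.pi / 9)) = ζ₉ * exp (I * t) := by
  rw [ζ₉, ← exp_add]
  congr 1
  push_cast
  ring

lemma Wmat_eq_diagonal : Wmat = diagonal fun r : Fin 3 => ζ₉ ^ (r : ℕ) := by
  rw [Wmat]
  congr 1
  funext r
  rw [ζ₉, ← exp_nat_mul]
  ring_nf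

lemma Zmat_three_eq_diagonal : Zmat 3 = diagonal fun r : Fin 3 => ζ₉ ^ (3 * (r : ℕ)) := by
  rw [Zmat]
  congr 1
  funext r
  rw [ζ₉, ← exp_nat_mul]
  push_cast
  ring_nf

lemma Zmat_pow_self (p : ℕ) : Zmat p ^ p = 1 := by
  rw [Zmat, diagonal_pow, ← diagonal_one]
  congr 1
  funext r
  have hp : (p : ℂ) ≠ 0 := Nat.cast_ne_zero.mpr r.pos.ne'
  rw [Pi.pow_apply, ← exp_nat_mul, exp_eq_one_iff]
  exact ⟨r, by push_cast; field_simp⟩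

lemma pow_val_add_fin {M : Type*} [Monoid M] {n : ℕ} {x : M} (hx : x ^ n = 1) (b c : Fin n) :
    x ^ ((b + c : Fin n) : ℕ) = x ^ (b : ℕ) * x ^ (c : ℕ) := by
  rw [Fin.val_add, ← pow_eq_pow_mod _ hx, pow_add]

lemma Wmat_commute_Zmat_pow (n : ℕ) : Commute Wmat (Zmat 3 ^ n) := by
  rw [Wmat_eq_diagonal, Zmat_three_eq_diagonal]
  exact (commute_diagonal _ _).pow_right n

lemma Xmat_three_mulVec (v : Fin 3 → ℂ) : Xmat 3 *ᵥ v = ![v 2, v 0, v 1] := by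
  ext r
  fin_cases r <;> simp [Xmat, mulVec, dotProduct, Fin.sum_univ_three]

def sicPhase : Fin 3 → ℂ := ![ζ₉, ζ₉ ^ 8, 1]

def zShift : Fin 3 → Fin 3 := ![0, 2, 0]

lemma norm_sicPhase (a : Fin 3) : ‖sicPhase a‖ = 1 := by
  fin_cases a
  · simpa [sicPhase] using norm_ζ₉_pow 1
  · exact norm_ζ₉_pow 8
  · simp [sicPhase]

lemma Wmat_mulVec_Xmat_pow_ψf (t : ℝ) (a : Fin 3) :
    Wmat *ᵥ (Xmat 3 ^ (a : ℕ) *ᵥ ψf t) =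
      sicPhase a •
        (Zmat 3 ^ (zShift a : ℕ) *ᵥ (Xmat 3 ^ (a : ℕ) *ᵥ ψf (t + 2 * Real.pi / 9))) := by
  rw [Wmat_eq_diagonal, Zmat_three_eq_diagonal, diagonal_pow]
  simp only [ψf, exp_I_mul_add_two_pi_div_nine]
  fin_cases a <;> ext r <;> fin_cases r <;>
    simp only [pow_zero, pow_one, sq, ← mulVec_mulVec, one_mulVec, diagonal_one', Xmat_three_mulVec,
      mulVec_diagonal, Pi.smul_apply, Pi.mul_apply, smul_eq_mul, sicPhase, zShift, Fin.isValue,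
      Fin.coe_ofNat_eq_mod, Nat.reduceMod, Fin.reduceFinMk, Fin.zero_eta, Fin.mk_one, cons_val,
      cons_val_zero, cons_val_one, mul_zero, mul_one, one_mul]
  · ring
  · linear_combination exp (I * t) / √2 * ζ₉_pow_nine
  · linear_combination -ζ₉ ^ 2 * (ζ₉ ^ 9 + 1) / √2 * ζ₉_pow_nine
  · ring

lemma Wmat_mulVec_sicVec (t : ℝ) (a b : Fin 3) :
    Wmat *ᵥ sicVec t a b = sicPhase a • sicVec (t + 2 * Real.pi / 9) a (b + zShift a) :=
  calc Wmat *ᵥ sicVec t a b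
        = Zmat 3 ^ (b : ℕ) *ᵥ (Wmat *ᵥ (Xmat 3 ^ (a : ℕ) *ᵥ ψf t)) := by
        simp only [sicVec, mulVec_mulVec, ← mul_assoc, (Wmat_commute_Zmat_pow b).eq]
    _ = sicPhase a • (Zmat 3 ^ (b : ℕ) * Zmat 3 ^ (zShift a : ℕ) * Xmat 3 ^ (a : ℕ)) *ᵥ
          ψf (t + 2 * Real.pi / 9) := by
        rw [Wmat_mulVec_Xmat_pow_ψf, mulVec_smul, mulVec_mulVec, mulVec_mulVec, mul_assoc]
    _ = sicPhase a • sicVec (t + 2 * Real.pi / 9) a (b + zShift a) := by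
        rw [sicVec, pow_val_add_fin (Zmat_pow_self 3)]

lemma image_lineOf (M : Matrix (Fin 3) (Fin 3) ℂ) (v : Fin 3 → ℂ) :
    M.mulVec '' lineOf v = lineOf (M.mulVec v) := by
  ext w
  constructor
  · rintro ⟨u, ⟨c, rfl⟩, rfl⟩
    exact ⟨c, M.mulVec_smul c v⟩
  · rintro ⟨c, rfl⟩
    exact ⟨c • v, ⟨c, rfl⟩, M.mulVec_smul c v⟩

lemma lineOf_smul {c : ℂ} (hc : c ≠ 0) (v : Fin 3 → ℂ) : lineOf (c • v) = lineOf v := by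
  ext w
  constructor
  · rintro ⟨d, rfl⟩
    exact ⟨d * c, smul_smul d c v⟩
  · rintro ⟨d, rfl⟩
    exact ⟨d * c⁻¹, by rw [smul_smul, inv_mul_cancel_right₀ hc]⟩

lemma Wmat_image_lineOf_sicVec (t : ℝ) (a b : Fin 3) :
    Wmat.mulVec '' lineOf (sicVec t a b) =
      lineOf (sicVec (t + 2 * Real.pi / 9) a (b + zShift a)) := by
  rw [image_lineOf, Wmat_mulVec_sicVec, lineOf_smul]
  exact norm_ne_zero_iff.mp (by simp [norm_sicPhase])

/-- The unitary `W = diag(1, e^{2πi/9}, e^{4πi/9})` maps each vector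
`Z^b X^a ψ_f(t)` to a phase times some `Z^{b'} X^{a'} ψ_f(t + 2π/9)`, and hence maps the set
of nine lines of the SIC POVM of `ψ_f(t)` bijectively onto that of `ψ_f(t + 2π/9)`: the two
SIC POVMs are unitarily equivalent. -/
theorem dim3_shift_by_two_pi_ninth_equivalence (t : ℝ) :
    (∀ a b : Fin 3, ∃ a' b' : Fin 3, ∃ c : ℂ, ‖c‖ = 1 ∧
      Wmat.mulVec (sicVec t a b) = c • sicVec (t + 2 * Real.pi / 9) a' b') ∧
    (fun l => Wmat.mulVec '' l) '' sicLines t = sicLines (t + 2 * Real.pi / 9) := by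
  refine ⟨fun a b =>
    ⟨a, b + zShift a, sicPhase a, norm_sicPhase a, Wmat_mulVec_sicVec t a b⟩, ?_⟩
  ext l
  simp only [sicLines, Set.mem_image, Set.mem_ofPred_eq]
  constructor
  · rintro ⟨_, ⟨a, b, rfl⟩, rfl⟩
    exact ⟨a, b + zShift a, Wmat_image_lineOf_sicVec t a b⟩
  · rintro ⟨a, b, rfl⟩
    refine ⟨_, ⟨a, b - zShift a, rfl⟩, ?_⟩
    rw [Wmat_image_lineOf_sicVec, sub_add_cancel]
end
end

section
/- Let p ≥ 5 be a prime, let τ = −e^{iπ/p}, and let X, Z be the p×p unitaries with Z e_r = ω^r e_r (ω = e^{2πi/p}) and X e_r = e_{r+1 (mod p)}. Define the diagonal unitaries V = diag(τ^{0²}, τ^{1²}, …, τ^{(p−1)²}) and U = diag(τ^{σ_0}, τ^{σ_1}, …, τ^{σ_{p−1}}) where σ_s = 1² + 2² + ⋯ + s² (σ_0 = 0). Then det V = 1, U Z U* = Z, and U X U* = V X; consequently U^j X U*^j = V^j X for all j = 0, …, p−1, so conjugation by U maps the subgroup ⟨Z, X⟩ of U(p) onto ⟨Z, V X⟩. -/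
noncomputable section

open Complex Matrix

/-- `τ = −e^{iπ/p}`. -/
def τc (p : ℕ) : ℂ := -Complex.exp ((Real.pi : ℂ) * Complex.I / (p : ℂ))

/-- The diagonal unitary `V = diag(τ^{0²}, τ^{1²}, …, τ^{(p−1)²})`. -/
def Vmat (p : ℕ) : Matrix (Fin p) (Fin p) ℂ :=
  Matrix.diagonal fun r => τc p ^ ((r : ℕ) ^ 2)

/-- `σ_s = 1² + 2² + ⋯ + s²` (with `σ_0 = 0`). -/
def σsum (s : ℕ) : ℕ := ∑ k ∈ Finset.range (s + 1), k ^ 2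

/-- The diagonal unitary `U = diag(τ^{σ_0}, τ^{σ_1}, …, τ^{σ_{p−1}})`. -/
def Umat (p : ℕ) : Matrix (Fin p) (Fin p) ℂ :=
  Matrix.diagonal fun r => τc p ^ σsum (r : ℕ)

/-
`U X U* = X · diag(u_{s+1} / u_s)` for the diagonal unitary `U = diag(u)`, and for `u_s = τ^{σ_s}`
the ratio is `τ^{(s+1)²}` because `σ_{s+1} = σ_s + (s+1)²`. At the wrap-around `s = p − 1` one needs
`τ^{σ_{p−1}} = 1`, which holds since `τ^p = 1` and `6 σ_{p−1} = (p−1) p (2p−1)` is divisible by `p`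
when `p` is prime to `6`; the same identity gives `det V = τ^{σ_{p−1}} = 1`. As `U` commutes with `V`,
iterating yields `U^j X U*^j = V^j X`, and conjugation by `U` is a monoid automorphism, so it maps
the closure of `{Z, X}` onto the closure of `{U Z U*, U X U*} = {Z, V X}`.
-/

lemma τc_mem_unitary (p : ℕ) : τc p ∈ unitary ℂ := by
  rw [Unitary.mem_iff_star_mul_self, τc, star_neg, neg_mul_neg, ← starRingEnd_apply,
    conj_mul', norm_exp]
  simp [div_re]

lemma τc_pow_of_odd {p : ℕ} (hp : Odd p) : τc p ^ p = 1 := by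
  have hp0 : (p : ℂ) ≠ 0 := Nat.cast_ne_zero.mpr (by rintro rfl; simp at hp)
  rw [τc, neg_pow, hp.neg_one_pow, ← Complex.exp_nat_mul, mul_div_cancel₀ _ hp0,
    exp_pi_mul_I]
  ring

lemma σsum_succ (n : ℕ) : σsum (n + 1) = σsum n + (n + 1) ^ 2 :=
  Finset.sum_range_succ _ _

lemma six_mul_σsum (n : ℕ) : 6 * σsum n = n * (n + 1) * (2 * n + 1) := by
  induction n with
  | zero => rfl
  | succ n ih => rw [σsum_succ, mul_add, ih]; ring

lemma dvd_σsum_pred {p : ℕ} (hp : p.Coprime 6) : p ∣ σsum (p - 1) := by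
  have hp0 : p ≠ 0 := by rintro rfl; norm_num at hp
  refine hp.dvd_of_dvd_mul_left ⟨(p - 1) * (2 * (p - 1) + 1), ?_⟩
  rw [six_mul_σsum, Nat.sub_add_cancel (Nat.one_le_iff_ne_zero.mpr hp0)]
  ring

lemma τc_pow_σsum_pred {p : ℕ} (hp : p.Coprime 6) : τc p ^ σsum (p - 1) = 1 := by
  obtain ⟨m, hm⟩ := dvd_σsum_pred hp
  rw [hm, pow_mul, τc_pow_of_odd (Nat.Coprime.odd_of_left (hp.symm.coprime_dvd_left
    (by norm_num))), one_pow]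

lemma pow_σsum_val_add_one {M : Type*} [Monoid M] {p : ℕ} [NeZero p] {ζ : M}
    (hζ : ζ ^ σsum (p - 1) = 1) (s : Fin p) :
    ζ ^ σsum ((s + 1 : Fin p) : ℕ) = ζ ^ ((s + 1 : Fin p) : ℕ) ^ 2 * ζ ^ σsum s := by
  obtain ⟨n, rfl⟩ := Nat.exists_eq_succ_of_ne_zero (NeZero.ne p)
  rw [Fin.val_add_one]
  split_ifs with hs
  · rw [Nat.succ_sub_one] at hζ
    subst hs
    rw [Fin.val_last, hζ, mul_one, zero_pow two_ne_zero]
    rfl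
  · rw [σsum_succ, add_comm, pow_add]

lemma diagonal_mem_unitary {n α : Type*} [Fintype n] [DecidableEq n] [Semiring α] [StarRing α]
    {d : n → α} (hd : ∀ i, d i ∈ unitary α) : diagonal d ∈ unitary (Matrix n n α) := by
  simp only [Unitary.mem_iff, star_eq_conjTranspose, diagonal_conjTranspose,
    diagonal_mul_diagonal, Pi.star_apply, Unitary.star_mul_self_of_mem (hd _),
    Unitary.mul_star_self_of_mem (hd _), diagonal_one, and_self]

lemma Umat_mem_unitary (p : ℕ) : Umat p ∈ unitary (Matrix (Fin p) (Fin p) ℂ) :=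
  diagonal_mem_unitary fun _ => pow_mem (τc_mem_unitary p) _

lemma det_Vmat {p : ℕ} (hσ : τc p ^ σsum (p - 1) = 1) : (Vmat p).det = 1 := by
  rcases p with _ | n
  · exact det_isEmpty
  rw [Vmat, det_diagonal, Finset.prod_pow_eq_pow_sum, Fin.sum_univ_eq_sum_range (· ^ 2)]
  exact hσ

lemma diagonal_mul_Xmat {p : ℕ} [NeZero p] (d : Fin p → ℂ) :
    diagonal d * Xmat p = Xmat p * diagonal fun s => d (s + 1) := by
  ext r s
  by_cases h : r = s + 1 <;> simp [Xmat, h]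

lemma Umat_mul_Xmat_mul_star {p : ℕ} [NeZero p] (hσ : τc p ^ σsum (p - 1) = 1) :
    Umat p * Xmat p * star (Umat p) = Vmat p * Xmat p := by
  rw [Umat, Vmat, diagonal_mul_Xmat, diagonal_mul_Xmat, mul_assoc, star_eq_conjTranspose,
    diagonal_conjTranspose, diagonal_mul_diagonal]
  congr 2
  funext s
  rw [Pi.star_apply, pow_σsum_val_add_one hσ, mul_assoc,
    Unitary.mul_star_self_of_mem (pow_mem (τc_mem_unitary p) _), mul_one]

lemma pow_mul_mul_pow_eq_pow_mul {M : Type*} [Monoid M] {u u' v x : M}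
    (h : u * x * u' = v * x) (huv : Commute u v) (j : ℕ) : u ^ j * x * u' ^ j = v ^ j * x := by
  induction j with
  | zero => simp
  | succ j ih =>
    calc u ^ (j + 1) * x * u' ^ (j + 1) = u * (u ^ j * x * u' ^ j) * u' := by
          rw [pow_succ', pow_succ]; simp only [mul_assoc]
      _ = v ^ j * (u * x * u') := by
          rw [ih, ← mul_assoc, (huv.pow_right j).eq]; simp only [mul_assoc]
      _ = v ^ (j + 1) * x := by rw [h, pow_succ, mul_assoc]

lemma conjSet_closure {d : ℕ} {W : Matrix (Fin d) (Fin d) ℂ} (hW : W ∈ unitary _)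
    (S : Set (Matrix (Fin d) (Fin d) ℂ)) :
    conjSet W (Submonoid.closure S) = Submonoid.closure (conjSet W S) := by
  have hconj : conjSet W = Set.image (Unitary.conjStarAlgAut ℂ _ ⟨W, hW⟩) := rfl
  rw [hconj, ← Submonoid.coe_map, MonoidHom.map_mclosure]

/-- For a prime `p ≥ 5`: `det V = 1`, `U Z U* = Z`, `U X U* = V X`, hence
`U^j X U*^j = V^j X` for `j = 0, …, p−1`, and conjugation by `U` maps the group `⟨Z, X⟩` onto
`⟨Z, V X⟩`. -/
theorem HW_conjugation_by_U (p : ℕ) [NeZero p] (hp : p.Prime) (hp5 : 5 ≤ p) :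
    (Vmat p).det = 1 ∧
    Umat p * Zmat p * star (Umat p) = Zmat p ∧
    Umat p * Xmat p * star (Umat p) = Vmat p * Xmat p ∧
    (∀ j : ℕ, j ≤ p - 1 →
      (Umat p) ^ j * Xmat p * (star (Umat p)) ^ j = (Vmat p) ^ j * Xmat p) ∧
    conjSet (Umat p)
        (Submonoid.closure ({Zmat p, Xmat p} : Set (Matrix (Fin p) (Fin p) ℂ)) :
          Submonoid (Matrix (Fin p) (Fin p) ℂ)) =
      (Submonoid.closure ({Zmat p, Vmat p * Xmat p} : Set (Matrix (Fin p) (Fin p) ℂ)) :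
        Submonoid (Matrix (Fin p) (Fin p) ℂ)) := by
  have hcop : p.Coprime 6 := Nat.Coprime.mul_right
    ((Nat.coprime_primes hp Nat.prime_two).mpr (by omega))
    ((Nat.coprime_primes hp Nat.prime_three).mpr (by omega))
  have hσ := τc_pow_σsum_pred hcop
  have hUX := Umat_mul_Xmat_mul_star hσ
  have hUZ : Umat p * Zmat p * star (Umat p) = Zmat p := by
    have hcomm : Commute (Umat p) (Zmat p) := commute_diagonal _ _
    rw [hcomm.eq, mul_assoc, Unitary.mul_star_self_of_mem (Umat_mem_unitary p), mul_one]
  refine ⟨det_Vmat hσ, hUZ, hUX,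
    fun j _ => pow_mul_mul_pow_eq_pow_mul hUX (commute_diagonal _ _) j, ?_⟩
  rw [conjSet_closure (Umat_mem_unitary p), conjSet, Set.image_pair, hUZ, hUX]
end
end

section
/- Let p be an odd prime and let V be a p×p unitary matrix such that V^{p+1} = I and |tr(V^n)| = 1 for every n = 1, …, p. Then the spectrum of V is nondegenerate: V has p pairwise distinct eigenvalues, each eigenvalue is a (p+1)-st root of unity, and every eigenspace of V is one-dimensional. In particular the eigenvalues of V are p of the p+1 distinct (p+1)-st roots of unity. -/
/-!
Since `X ^ (p + 1) - 1` is separable, `V ^ (p + 1) = 1` makes `V` diagonalisable with eigenvalues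
among the `(p + 1)`-st roots of unity. Writing `m μ` for the dimension of the `μ`-eigenspace,
`tr (V ^ n) = ∑ μ, m μ * μ ^ n`, so `∑ μ, m μ = p`, and orthogonality of the characters
`n ↦ μ ^ n` of `ℤ/(p+1)` gives `∑_{n ≤ p} ‖tr (V ^ n)‖² = (p + 1) ∑ μ, m μ ^ 2`. The trace
hypothesis makes the left side `p ^ 2 + p`, hence `∑ μ, m μ ^ 2 = p = ∑ μ, m μ`, which forces
every `m μ ≤ 1`.
-/

open Complex Matrix Polynomial Module Finset ComplexConjugate

lemma Complex.sum_range_pow_mul_conj_pow {N : ℕ} (hN : N ≠ 0) {μ ν : ℂ} (hμ : μ ^ N = 1)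
    (hν : ν ^ N = 1) : ∑ n ∈ range N, (μ * conj ν) ^ n = if μ = ν then (N : ℂ) else 0 := by
  have hν0 : ν ≠ 0 := by rintro rfl; simp [hN] at hν
  rw [← Complex.inv_eq_conj (Complex.norm_eq_one_of_pow_eq_one hν hN), ← div_eq_mul_inv]
  split_ifs with h
  · simp [h, hν0]
  · have hz : μ / ν ≠ 1 := fun h' => h ((div_eq_one_iff_eq hν0).1 h')
    rw [geom_sum_eq hz, div_pow, hμ, hν, div_one, sub_self, zero_div]

lemma Complex.sum_range_norm_sq_sum_nthRootsFinset {N : ℕ} (hN : N ≠ 0) (c : ℂ → ℂ) :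
    ∑ n ∈ range N, ‖∑ μ ∈ nthRootsFinset N (1 : ℂ), c μ * μ ^ n‖ ^ 2 =
      N * ∑ μ ∈ nthRootsFinset N (1 : ℂ), ‖c μ‖ ^ 2 := by
  set S := nthRootsFinset N (1 : ℂ)
  have hS : ∀ μ ∈ S, μ ^ N = 1 := fun μ hμ => (mem_nthRootsFinset (Nat.pos_of_ne_zero hN) 1).1 hμ
  apply Complex.ofReal_injective
  push_cast
  simp_rw [← Complex.mul_conj', map_sum, map_mul, map_pow, sum_mul_sum, mul_sum]
  calc ∑ n ∈ range N, ∑ μ ∈ S, ∑ ν ∈ S, c μ * μ ^ n * (conj (c ν) * conj ν ^ n)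
      = ∑ μ ∈ S, ∑ ν ∈ S, c μ * conj (c ν) * ∑ n ∈ range N, (μ * conj ν) ^ n := by
        rw [sum_comm]; refine sum_congr rfl fun μ _ => ?_
        rw [sum_comm]; refine sum_congr rfl fun ν _ => ?_
        rw [mul_sum]; refine sum_congr rfl fun n _ => ?_
        ring
    _ = ∑ μ ∈ S, N * (c μ * conj (c μ)) := by
        refine sum_congr rfl fun μ hμ => ?_
        rw [sum_congr rfl fun ν hν => by rw [sum_range_pow_mul_conj_pow hN (hS μ hμ) (hS ν hν)]]
        simp only [mul_ite, mul_zero, sum_ite_eq, hμ, if_true]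
        ring

lemma Finset.le_one_of_sum_sq_eq_sum {ι : Type*} {s : Finset ι} {m : ι → ℕ}
    (h : ∑ i ∈ s, m i ^ 2 = ∑ i ∈ s, m i) : ∀ i ∈ s, m i ≤ 1 := fun i hi => by
  have := (sum_eq_sum_iff_of_le fun i _ => Nat.le_self_pow two_ne_zero (m i)).1 h.symm i hi
  nlinarith

namespace Module.End

section Field

variable {K M : Type*} [Field K] [AddCommGroup M] [Module K M] {f : End K M}

lemma isSemisimple_of_pow_eq_one {N : ℕ} (hN : (N : K) ≠ 0) (hf : f ^ N = 1) :
    f.IsSemisimple :=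
  isSemisimple_of_squarefree_aeval_eq_zero (separable_X_pow_sub_C 1 hN one_ne_zero).squarefree
    (by simp [hf])

lemma pow_eq_one_of_hasEigenvalue {N : ℕ} (hf : f ^ N = 1) {μ : K} (hμ : f.HasEigenvalue μ) :
    μ ^ N = 1 := by
  obtain ⟨v, hv⟩ := hμ.exists_hasEigenvector
  have hfix : μ ^ N • v = (1 : K) • v := by rw [← hv.pow_apply, hf, one_smul, one_apply]
  exact smul_left_injective K hv.2 hfix

lemma pow_apply_of_mem_eigenspace {μ : K} {x : M} (hx : x ∈ f.eigenspace μ) (n : ℕ) :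
    (f ^ n) x = μ ^ n • x := by
  rcases eq_or_ne x 0 with rfl | hx0
  · simp
  · exact HasEigenvector.pow_apply ⟨hx, hx0⟩ n

variable [FiniteDimensional K M]

lemma trace_pow_eq_sum_of_isInternal_eigenspace {ι : Type*} [Fintype ι] [DecidableEq ι]
    {χ : ι → K} (h : DirectSum.IsInternal fun i => f.eigenspace (χ i)) (n : ℕ) :
    LinearMap.trace K M (f ^ n) = ∑ i, finrank K (f.eigenspace (χ i)) * χ i ^ n := by
  have hmaps : ∀ i, Set.MapsTo (f ^ n) (f.eigenspace (χ i)) (f.eigenspace (χ i)) :=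
    fun i x hx => by
      rw [SetLike.mem_coe, pow_apply_of_mem_eigenspace hx]
      exact Submodule.smul_mem _ _ hx
  rw [LinearMap.trace_eq_sum_trace_restrict h hmaps]
  refine sum_congr rfl fun i _ => ?_
  have hscalar : (f ^ n).restrict (hmaps i) = χ i ^ n • LinearMap.id :=
    LinearMap.ext fun x => Subtype.ext (pow_apply_of_mem_eigenspace x.2 n)
  rw [hscalar, map_smul, LinearMap.trace_id, smul_eq_mul, mul_comm]

lemma exists_injective_eigenvalues_of_finrank_eigenspace_le_one
    {S : Finset K} {p : ℕ} (hS : ∀ μ, f.HasEigenvalue μ → μ ∈ S)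
    (hle : ∀ μ ∈ S, finrank K (f.eigenspace μ) ≤ 1)
    (hsum : ∑ μ ∈ S, finrank K (f.eigenspace μ) = p) :
    ∃ e : Fin p → K, Function.Injective e ∧ (∀ i, e i ∈ S) ∧ (∀ i, f.HasEigenvalue (e i)) ∧
      (∀ μ, f.HasEigenvalue μ → μ ∈ Set.range e) ∧
      ∀ i, finrank K (f.eigenspace (e i)) = 1 := by
  classical
  have hev : ∀ μ, f.HasEigenvalue μ ↔ finrank K (f.eigenspace μ) ≠ 0 := fun μ => by
    rw [hasEigenvalue_iff, Ne, Ne, Submodule.finrank_eq_zero]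
  have hone : ∀ μ ∈ S, f.HasEigenvalue μ → finrank K (f.eigenspace μ) = 1 :=
    fun μ hμS hμ => le_antisymm (hle μ hμS) (Nat.one_le_iff_ne_zero.2 ((hev μ).1 hμ))
  set E := S.filter fun μ => f.HasEigenvalue μ
  have hcard : #E = p := by
    rw [← hsum, card_filter]
    refine sum_congr rfl fun μ hμS => ?_
    by_cases hμ : f.HasEigenvalue μ
    · rw [if_pos hμ, hone μ hμS hμ]
    · rw [if_neg hμ, eq_comm, ← not_ne_iff, ← hev]
      exact hμ
  set e := E.equivFinOfCardEq hcard
  have hmem : ∀ i, (e.symm i : K) ∈ E := fun i => (e.symm i).2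
  refine ⟨fun i => e.symm i, Subtype.val_injective.comp e.symm.injective,
    fun i => (mem_filter.1 (hmem i)).1, fun i => (mem_filter.1 (hmem i)).2, ?_,
    fun i => hone _ (mem_filter.1 (hmem i)).1 (mem_filter.1 (hmem i)).2⟩
  intro μ hμ
  exact ⟨e ⟨μ, mem_filter.2 ⟨hS μ hμ, hμ⟩⟩, by simp⟩

variable [IsAlgClosed K] {N : ℕ}

lemma isInternal_eigenspace_nthRootsFinset [DecidableEq K] (hN : (N : K) ≠ 0) (hf : f ^ N = 1) :
    DirectSum.IsInternal fun μ : nthRootsFinset N (1 : K) => f.eigenspace μ := by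
  refine DirectSum.isInternal_submodule_of_iSupIndep_of_iSup_eq_top
    (f.eigenspaces_iSupIndep.comp Subtype.val_injective) ?_
  rw [eq_top_iff, ← (isSemisimple_of_pow_eq_one hN hf).iSup_eigenspace_eq_top]
  refine iSup_le fun μ => ?_
  by_cases hμ : f.HasEigenvalue μ
  · have hmem : μ ∈ nthRootsFinset N (1 : K) :=
      (mem_nthRootsFinset (Nat.pos_of_ne_zero (by rintro rfl; simp at hN)) 1).2
        (pow_eq_one_of_hasEigenvalue hf hμ)
    exact le_iSup_of_le ⟨μ, hmem⟩ le_rfl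
  · rw [hasEigenvalue_iff, not_not] at hμ
    simp [hμ]

lemma trace_pow_eq_sum_nthRootsFinset (hN : (N : K) ≠ 0) (hf : f ^ N = 1) (n : ℕ) :
    LinearMap.trace K M (f ^ n) =
      ∑ μ ∈ nthRootsFinset N (1 : K), finrank K (f.eigenspace μ) * μ ^ n := by
  classical
  rw [trace_pow_eq_sum_of_isInternal_eigenspace (isInternal_eigenspace_nthRootsFinset hN hf)]
  exact sum_coe_sort _ fun μ => (finrank K (f.eigenspace μ) : K) * μ ^ n

lemma sum_finrank_eigenspace_nthRootsFinset [CharZero K] (hN : N ≠ 0) (hf : f ^ N = 1) :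
    ∑ μ ∈ nthRootsFinset N (1 : K), finrank K (f.eigenspace μ) = finrank K M := by
  have h := trace_pow_eq_sum_nthRootsFinset (Nat.cast_ne_zero.2 hN) hf 0
  simp only [pow_zero, mul_one, LinearMap.trace_one] at h
  exact_mod_cast h.symm

end Field

lemma sum_range_norm_sq_trace_pow {M : Type*} [AddCommGroup M] [Module ℂ M]
    [FiniteDimensional ℂ M] {f : End ℂ M} {N : ℕ} (hN : N ≠ 0) (hf : f ^ N = 1) :
    ∑ n ∈ range N, ‖LinearMap.trace ℂ M (f ^ n)‖ ^ 2 =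
      N * ∑ μ ∈ nthRootsFinset N (1 : ℂ), (finrank ℂ (f.eigenspace μ) : ℝ) ^ 2 := by
  simp_rw [trace_pow_eq_sum_nthRootsFinset (Nat.cast_ne_zero.2 hN) hf,
    Complex.sum_range_norm_sq_sum_nthRootsFinset hN, Complex.norm_natCast]

end Module.End

open Module.End in
theorem unitary_order_p_plus_one_nondegenerate_spectrum_general (p : ℕ)
    (V : Matrix (Fin p) (Fin p) ℂ)
    (hVpow : V ^ (p + 1) = 1)
    (htr : ∀ n : ℕ, 1 ≤ n → n ≤ p → ‖Matrix.trace (V ^ n)‖ = 1) :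
    ∃ f : Fin p → ℂ, Function.Injective f ∧
      (∀ i, f i ^ (p + 1) = 1) ∧
      (∀ i, Module.End.HasEigenvalue (Matrix.toLin' V) (f i)) ∧
      (∀ μ : ℂ, Module.End.HasEigenvalue (Matrix.toLin' V) μ → μ ∈ Set.range f) ∧
      (∀ i, Module.finrank ℂ (Module.End.eigenspace (Matrix.toLin' V) (f i)) = 1) := by
  have hf : toLin' V ^ (p + 1) = 1 := by rw [← toLin'_pow, hVpow, toLin'_one]; rfl
  have hsum : ∑ μ ∈ nthRootsFinset (p + 1) (1 : ℂ), finrank ℂ (eigenspace (toLin' V) μ) = p := by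
    rw [sum_finrank_eigenspace_nthRootsFinset p.add_one_ne_zero hf, finrank_fin_fun]
  have hnorm : ∑ n ∈ range (p + 1), ‖LinearMap.trace ℂ _ (toLin' V ^ n)‖ ^ 2 =
      ((p + 1 : ℕ) : ℝ) * p := by
    rw [sum_range_succ', sum_congr rfl fun n hn => by
      rw [← toLin'_pow, trace_toLin'_eq, htr (n + 1) n.succ_pos (mem_range.1 hn)]]
    simp only [one_pow, sum_const, card_range, nsmul_eq_mul, mul_one, pow_zero,
      LinearMap.trace_one, finrank_fin_fun, Complex.norm_natCast]
    push_cast; ring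
  have hsq : ∑ μ ∈ nthRootsFinset (p + 1) (1 : ℂ), finrank ℂ (eigenspace (toLin' V) μ) ^ 2 = p := by
    rw [sum_range_norm_sq_trace_pow p.add_one_ne_zero hf] at hnorm
    exact_mod_cast mul_left_cancel₀ (by positivity) hnorm
  obtain ⟨e, he, heS, hev, hrange, hrank⟩ :=
    exists_injective_eigenvalues_of_finrank_eigenspace_le_one
      (fun μ hμ => (mem_nthRootsFinset p.succ_pos 1).2 (pow_eq_one_of_hasEigenvalue hf hμ))
      (le_one_of_sum_sq_eq_sum (hsq.trans hsum.symm)) hsum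
  exact ⟨e, he, fun i => (mem_nthRootsFinset p.succ_pos 1).1 (heS i), hev, hrange, hrank⟩

/-- Let `p` be an odd prime and `V` a `p×p` unitary with `V^{p+1} = 1` and
`|tr(V^n)| = 1` for `n = 1, …, p`.  Then `V` has `p` pairwise distinct eigenvalues, each a
`(p+1)`-st root of unity, these are all the eigenvalues, and every eigenspace of `V` is
one-dimensional. -/
theorem unitary_order_p_plus_one_nondegenerate_spectrum (p : ℕ) (hp : p.Prime) (hodd : Odd p)
    (V : Matrix (Fin p) (Fin p) ℂ) (hV : V ∈ Matrix.unitaryGroup (Fin p) ℂ)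
    (hVpow : V ^ (p + 1) = 1)
    (htr : ∀ n : ℕ, 1 ≤ n → n ≤ p → ‖Matrix.trace (V ^ n)‖ = 1) :
    ∃ f : Fin p → ℂ, Function.Injective f ∧
      (∀ i, f i ^ (p + 1) = 1) ∧
      (∀ i, Module.End.HasEigenvalue (Matrix.toLin' V) (f i)) ∧
      (∀ μ : ℂ, Module.End.HasEigenvalue (Matrix.toLin' V) μ → μ ∈ Set.range f) ∧
      (∀ i, Module.finrank ℂ (Module.End.eigenspace (Matrix.toLin' V) (f i)) = 1) :=
  unitary_order_p_plus_one_nondegenerate_spectrum_general p V hVpow htr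
end

section
/- Let ω = e^{2πi/3}, let Z be the diagonal 3×3 unitary with Z e_r = ω^r e_r and X the cyclic shift with X e_r = e_{r+1 (mod 3)}, and for t ∈ ℝ let ψ_f(t) = (0, 1, −e^{it})/√2 ∈ ℂ³. Then for any t_0, t_1, t_2 ∈ ℝ, the nine vectors Z^b X^a ψ_f(t_a), a, b ∈ {0,1,2}, form a SIC POVM in ℂ³: each is a unit vector and any two of them indexed by distinct pairs (a,b) ≠ (a',b') have squared overlap |⟨Z^b X^a ψ_f(t_a), Z^{b'} X^{a'} ψ_f(t_{a'})⟩|² = 1/4. -/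
noncomputable section

open Complex Matrix

/-!
Entrywise, `(Z^b X^a ψ) r = ω^(b r) ψ (r - a)`, and `X^a ψ_f(t)` vanishes exactly at `r = a` and has
entries of modulus `1/√2` elsewhere. For `a ≠ a'` the supports of the two shifted vectors meet in
the single remaining index, so the overlap is one product of modulus `1/2`. For `a = a'` the
overlap is `½ ∑_{r ≠ a} ζ^r` with `ζ = ω^(b' - b)`; the full sum `∑_r ζ^r` vanishes for `ζ ≠ 1`,
leaving `-ζ^a / 2`, while `ζ = 1` gives the norm `1`. The phases `t_a` never matter.
-/

open ComplexConjugate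

def ω (p : ℕ) : ℂ := exp (2 * Real.pi * I / p)

lemma isPrimitiveRoot_ω {p : ℕ} (hp : p ≠ 0) : IsPrimitiveRoot (ω p) p :=
  isPrimitiveRoot_exp p hp

lemma Zmat_pow_mulVec_apply (p b : ℕ) (v : Fin p → ℂ) (r : Fin p) :
    (Zmat p ^ b *ᵥ v) r = (ω p ^ b) ^ (r : ℕ) * v r := by
  rw [Zmat, diagonal_pow, mulVec_diagonal, Pi.pow_apply, ← pow_mul, ω, ← exp_nat_mul,
    ← exp_nat_mul]
  congr 2
  push_cast
  ring

lemma Xmat_mulVec_apply {p : ℕ} [NeZero p] (v : Fin p → ℂ) (r : Fin p) :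
    (Xmat p *ᵥ v) r = v (r - 1) := by
  simp [Xmat, mulVec, dotProduct, eq_comm (a := r), ← eq_sub_iff_add_eq]

open Fin.NatCast Fin.CommRing in
lemma Xmat_pow_mulVec_apply {p : ℕ} [NeZero p] (n : ℕ) (v : Fin p → ℂ) (r : Fin p) :
    (Xmat p ^ n *ᵥ v) r = v (r - n) := by
  induction n generalizing v r with
  | zero => simp
  | succ n ih =>
    rw [pow_succ, ← mulVec_mulVec, ih, Xmat_mulVec_apply]
    congr 1
    push_cast
    ring

lemma inn_Zmat_pow_mul_Xmat_pow_mulVec {p : ℕ} [NeZero p] (a a' b b' : Fin p)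
    (u w : Fin p → ℂ) :
    inn ((Zmat p ^ (b : ℕ) * Xmat p ^ (a : ℕ)) *ᵥ u)
        ((Zmat p ^ (b' : ℕ) * Xmat p ^ (a' : ℕ)) *ᵥ w) =
      ∑ r : Fin p, (conj (ω p ^ (b : ℕ)) * ω p ^ (b' : ℕ)) ^ (r : ℕ) *
        (conj (u (r - a)) * w (r - a')) := by
  simp only [inn, ← mulVec_mulVec, Zmat_pow_mulVec_apply, Xmat_pow_mulVec_apply,
    Fin.cast_val_eq_self, map_mul, map_pow]
  congr 1
  ext r
  ring

lemma conj_mul_eq_one_iff {x y : ℂ} (hx : ‖x‖ = 1) : conj x * y = 1 ↔ y = x := by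
  have hxx : conj x * x = 1 := by simp [conj_mul', hx]
  rw [← hxx, mul_right_inj' ((map_ne_zero _).2 (norm_ne_zero_iff.1 (by simp [hx])))]

lemma sum_fin_pow_eq_zero {K : Type*} [DivisionRing K] {ζ : K} {n : ℕ} (hζ : ζ ≠ 1)
    (hn : ζ ^ n = 1) : ∑ r : Fin n, ζ ^ (r : ℕ) = 0 := by
  rw [Fin.sum_univ_eq_sum_range (ζ ^ ·), geom_sum_eq hζ, hn, sub_self, zero_div]

lemma ψf_zero (t : ℝ) : ψf t 0 = 0 := rfl

lemma norm_sq_ψf (t : ℝ) (j : Fin 3) : ‖ψf t j‖ ^ 2 = if j = 0 then 0 else 1 / 2 := by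
  fin_cases j <;> simp [ψf]

lemma existsUnique_ne_and_ne_of_ne {a a' : Fin 3} (h : a ≠ a') : ∃! r, r ≠ a ∧ r ≠ a' := by
  unfold ExistsUnique
  revert a a'
  decide

lemma norm_ω_pow {p : ℕ} (hp : p ≠ 0) (n : ℕ) : ‖ω p ^ n‖ = 1 := by
  rw [norm_pow, (isPrimitiveRoot_ω hp).norm'_eq_one hp, one_pow]

lemma norm_conj_ω_pow_mul_ω_pow {p : ℕ} (hp : p ≠ 0) (b b' : ℕ) :
    ‖conj (ω p ^ b) * ω p ^ b'‖ = 1 := by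
  rw [norm_mul, norm_conj, norm_ω_pow hp, norm_ω_pow hp, one_mul]

lemma inn_sicVec (s s' : ℝ) (a a' b b' : Fin 3) :
    inn (sicVec s a b) (sicVec s' a' b') =
      ∑ r : Fin 3, (conj (ω 3 ^ (b : ℕ)) * ω 3 ^ (b' : ℕ)) ^ (r : ℕ) *
        (conj (ψf s (r - a)) * ψf s' (r - a')) :=
  inn_Zmat_pow_mul_Xmat_pow_mulVec a a' b b' (ψf s) (ψf s')

lemma sum_pow_mul_conj_ψf_mul_ψf (ζ : ℂ) (s : ℝ) (a : Fin 3) :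
    ∑ r : Fin 3, ζ ^ (r : ℕ) * (conj (ψf s (r - a)) * ψf s (r - a)) =
      (∑ r : Fin 3, ζ ^ (r : ℕ) - ζ ^ (a : ℕ)) / 2 := by
  have hterm (r : Fin 3) : ζ ^ (r : ℕ) * (conj (ψf s (r - a)) * ψf s (r - a)) =
      (ζ ^ (r : ℕ) - if a = r then ζ ^ (r : ℕ) else 0) / 2 := by
    rw [conj_mul', ← ofReal_pow, norm_sq_ψf]
    simp only [sub_eq_zero, eq_comm (a := r)]
    split_ifs <;> push_cast <;> ring
  simp_rw [hterm, ← Finset.sum_div, Finset.sum_sub_distrib, Finset.sum_ite_eq,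
    if_pos (Finset.mem_univ a)]

lemma inn_sicVec_self (s : ℝ) (a b : Fin 3) : inn (sicVec s a b) (sicVec s a b) = 1 := by
  have hζ : conj (ω 3 ^ (b : ℕ)) * ω 3 ^ (b : ℕ) = 1 :=
    (conj_mul_eq_one_iff (norm_ω_pow three_ne_zero b)).2 rfl
  rw [inn_sicVec, sum_pow_mul_conj_ψf_mul_ψf, hζ]
  norm_num

lemma norm_sq_inn_sicVec_of_ne_right (s : ℝ) (a : Fin 3) {b b' : Fin 3} (hb : b ≠ b') :
    ‖inn (sicVec s a b) (sicVec s a b')‖ ^ 2 = 1 / 4 := by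
  have hω := isPrimitiveRoot_ω three_ne_zero
  set ζ := conj (ω 3 ^ (b : ℕ)) * ω 3 ^ (b' : ℕ) with hζ
  have hζ_ne_one : ζ ≠ 1 := by
    rw [hζ, Ne, conj_mul_eq_one_iff (norm_ω_pow three_ne_zero b)]
    exact fun h => hb (Fin.ext (hω.pow_inj b'.isLt b.isLt h).symm)
  have hζ_pow : ζ ^ 3 = 1 := by
    rw [hζ, mul_pow, ← map_pow, ← pow_mul, ← pow_mul, mul_comm (b : ℕ), mul_comm (b' : ℕ),
      pow_mul, pow_mul, hω.pow_eq_one, one_pow, one_pow, map_one, one_mul]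
  have hζ_norm : ‖ζ‖ = 1 := norm_conj_ω_pow_mul_ω_pow three_ne_zero b b'
  rw [inn_sicVec, sum_pow_mul_conj_ψf_mul_ψf, sum_fin_pow_eq_zero hζ_ne_one hζ_pow, zero_sub,
    norm_div, norm_neg, norm_pow, hζ_norm, one_pow]
  norm_num

lemma norm_sq_inn_sicVec_of_ne_left (s s' : ℝ) {a a' : Fin 3} (b b' : Fin 3) (ha : a ≠ a') :
    ‖inn (sicVec s a b) (sicVec s' a' b')‖ ^ 2 = 1 / 4 := by
  obtain ⟨r₀, ⟨hr₀a, hr₀a'⟩, huniq⟩ := existsUnique_ne_and_ne_of_ne ha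
  rw [inn_sicVec, Finset.sum_eq_single r₀]
  · rw [norm_mul, norm_mul, norm_pow, norm_conj_ω_pow_mul_ω_pow three_ne_zero, norm_conj, mul_pow,
      mul_pow, norm_sq_ψf, norm_sq_ψf, if_neg (sub_ne_zero.2 hr₀a), if_neg (sub_ne_zero.2 hr₀a')]
    norm_num
  · intro r _ hr
    obtain rfl | rfl : r = a ∨ r = a' := by
      by_contra! h
      exact hr (huniq r h)
    all_goals simp [ψf_zero]
  · simp

/-- (Regrouping.) For any parameters `t_0, t_1, t_2`, the nine vectors
`Z^b X^a ψ_f(t_a)`, `a, b ∈ {0,1,2}`, form a SIC POVM in `ℂ³`. -/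
theorem dim3_regrouped_family_is_SIC (t : Fin 3 → ℝ) :
    (∀ a b : Fin 3, inn (sicVec (t a) a b) (sicVec (t a) a b) = 1) ∧
    (∀ a b a' b' : Fin 3, (a, b) ≠ (a', b') →
      ‖inn (sicVec (t a) a b) (sicVec (t a') a' b')‖ ^ 2 = 1 / 4) := by
  refine ⟨fun a b => inn_sicVec_self (t a) a b, fun a b a' b' hne => ?_⟩
  rcases eq_or_ne a a' with rfl | ha
  · exact norm_sq_inn_sicVec_of_ne_right (t a) a fun hb => hne (hb ▸ rfl)
  · exact norm_sq_inn_sicVec_of_ne_left (t a) (t a') b b' ha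
end
end
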